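/- If a pointwise function φ : ℝ → ℝ satisfies ‖φ − p‖_{L²(μ)} ≤ ε for a polynomial p of degree r, and z is a 1-periodic trigonometric polynomial with band-limit B whose value distribution (pushforward of Lebesgue measure on [0,1] under z) equals μ, then the high-frequency tail energy of φ∘z beyond frequency rB satisfies ∑_{|k| > rB} |c_k(φ∘z)|² ≤ ε², where c_k(φ∘z) are the Fourier coefficients of φ∘z. -/

import Mathlib

open MeasureTheory Complex Set Finset AddCircle intervalIntegral

noncomputable section

instance fact_zero_lt_one_real : Fact ((0:ℝ) < 1) := ⟨one_pos⟩

namespace CTEB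




/-- A function is band-limited with band `N`. -/
def BL (N : ℤ) (f : ℝ → ℂ) : Prop :=
  ∃ d : ℤ → ℂ, ∀ x : ℝ, f x =
    ∑ m ∈ Finset.Icc (-N) N, d m * Complex.exp (2 * (Real.pi : ℂ) * Complex.I * (m : ℂ) * (x : ℂ))

theorem BL.mono {N M : ℤ} {f : ℝ → ℂ} (h : BL N f) (hNM : N ≤ M) : BL M f := by
  obtain ⟨d, hd⟩ := h
  refine ⟨fun m => if m ∈ Finset.Icc (-N) N then d m else 0, fun x => ?_⟩
  simp only [hd]
  calc ∑ m ∈ Finset.Icc (-N) N, d m * Complex.exp (2 * (Real.pi : ℂ) * Complex.I * (m : ℂ) * (x : ℂ))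
      = ∑ m ∈ Finset.Icc (-N) N, (if m ∈ Finset.Icc (-N) N then d m else 0) *
          Complex.exp (2 * (Real.pi : ℂ) * Complex.I * (m : ℂ) * (x : ℂ)) :=
        Finset.sum_congr rfl fun m hm => by rw [if_pos hm]
    _ = ∑ m ∈ Finset.Icc (-M) M, (if m ∈ Finset.Icc (-N) N then d m else 0) *
          Complex.exp (2 * (Real.pi : ℂ) * Complex.I * (m : ℂ) * (x : ℂ)) :=
        Finset.sum_subset (Finset.Icc_subset_Icc (neg_le_neg hNM) hNM)
          (fun m _ hm => by rw [if_neg hm, zero_mul])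

theorem BL.add {N : ℤ} {f g : ℝ → ℂ} (hf : BL N f) (hg : BL N g) :
    BL N (fun x => f x + g x) := by
  obtain ⟨d, hd⟩ := hf; obtain ⟨e, he⟩ := hg
  refine ⟨fun m => d m + e m, fun x => ?_⟩
  simp only [hd, he, add_mul, Finset.sum_add_distrib]

theorem BL.zero {N : ℤ} : BL N (fun _ => (0 : ℂ)) :=
  ⟨fun _ => 0, fun x => by simp⟩

theorem BL.const_mul {N : ℤ} {f : ℝ → ℂ} (hf : BL N f) (a : ℂ) :
    BL N (fun x => a * f x) := by
  obtain ⟨d, hd⟩ := hf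
  refine ⟨fun m => a * d m, fun x => ?_⟩
  simp only [hd, Finset.mul_sum, mul_assoc]

theorem BL.mul {N M : ℤ} {f g : ℝ → ℂ} (hN : 0 ≤ N) (hM : 0 ≤ M)
    (hf : BL N f) (hg : BL M g) : BL (N + M) (fun x => f x * g x) := by
  obtain ⟨d, hd⟩ := hf; obtain ⟨e, he⟩ := hg
  refine ⟨fun s => ∑ m ∈ Finset.Icc (-N) N, ∑ k ∈ Finset.Icc (-M) M,
      if m + k = s then d m * e k else 0, fun x => ?_⟩
  simp only [hd, he]
  rw [Finset.sum_mul_sum]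
  simp only [Finset.sum_mul]
  rw [Finset.sum_comm (s := Finset.Icc (-(N + M)) (N + M))]
  refine Finset.sum_congr rfl fun m hm => ?_
  rw [Finset.sum_comm (s := Finset.Icc (-(N + M)) (N + M)) (t := Finset.Icc (-M) M)]
  refine Finset.sum_congr rfl fun k hk => ?_
  simp only [Finset.mem_Icc] at hm hk
  have hmem : m + k ∈ Finset.Icc (-(N + M)) (N + M) := by
    simp only [Finset.mem_Icc]; omega
  have hstep : ∀ s ∈ Finset.Icc (-(N + M)) (N + M),
      (if m + k = s then d m * e k else 0) *
        Complex.exp (2 * (Real.pi : ℂ) * Complex.I * (s : ℂ) * (x : ℂ)) =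
      if s = m + k then d m * e k *
        Complex.exp (2 * (Real.pi : ℂ) * Complex.I * ((m + k : ℤ) : ℂ) * (x : ℂ)) else 0 := by
    intro s _
    by_cases h : s = m + k
    · subst h; simp
    · rw [if_neg (fun hh => h hh.symm), if_neg h, zero_mul]
  rw [Finset.sum_congr rfl hstep, Finset.sum_ite_eq' _ (m + k) _, if_pos hmem]
  rw [mul_mul_mul_comm, ← Complex.exp_add]
  push_cast
  ring_nf

theorem BL.const {a : ℂ} : BL 0 (fun _ => a) := by
  refine ⟨fun m => if m = 0 then a else 0, fun x => ?_⟩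
  simp

theorem BL.pow {B : ℕ} {f : ℝ → ℂ} (hf : BL (B : ℤ) f) (j : ℕ) :
    BL ((j : ℤ) * B) (fun x => f x ^ j) := by
  induction j with
  | zero => simpa using (BL.const (a := (1:ℂ)))
  | succ n ih =>
      have h2 := BL.mul (mul_nonneg (Int.ofNat_nonneg n) (Int.ofNat_nonneg B))
        (Int.ofNat_nonneg B) ih hf
      have heq : ((n + 1 : ℕ) : ℤ) * B = (n : ℤ) * B + B := by push_cast; ring
      rw [heq]
      simpa [pow_succ] using h2

theorem BL.finset_sum {N : ℤ} {ι : Type*} (s : Finset ι) (f : ι → ℝ → ℂ)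
    (h : ∀ i ∈ s, BL N (f i)) : BL N (fun x => ∑ i ∈ s, f i x) := by
  classical
  induction s using Finset.induction_on with
  | empty => simpa using (BL.zero (N := N))
  | insert a t hni ih =>
      rw [show (fun x => ∑ i ∈ insert a t, f i x) = fun x => f a x + ∑ i ∈ t, f i x by
        funext x; rw [Finset.sum_insert hni]]
      exact (h a (Finset.mem_insert_self a t)).add
        (ih fun i hi => h i (Finset.mem_insert_of_mem hi))

/-- integral of `exp (2πi n x)` over `[0,1]` vanishes for `n ≠ 0`. -/
theorem integral_exp_eq_zero {n : ℤ} (hn : n ≠ 0) :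
    ∫ x in (0:ℝ)..1, Complex.exp (2 * (Real.pi : ℂ) * Complex.I * (n : ℂ) * (x : ℂ)) = 0 := by
  have hc : (2 * (Real.pi : ℂ) * Complex.I * (n : ℂ)) ≠ 0 := by
    simp [Real.pi_ne_zero, Complex.I_ne_zero, hn]
  have h1 : Complex.exp (2 * (Real.pi : ℂ) * Complex.I * (n : ℂ) * ((1:ℝ):ℂ)) = 1 := by
    push_cast
    rw [mul_one, show (2 * (Real.pi : ℂ) * Complex.I * (n : ℂ))
      = (n : ℂ) * (2 * Real.pi * Complex.I) by ring]
    exact Complex.exp_int_mul_two_pi_mul_I n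
  rw [integral_exp_mul_complex hc, h1]
  norm_num

/-- main vanishing lemma -/
theorem BL.integral_mul_exp_eq_zero {N : ℤ} {f : ℝ → ℂ} (hf : BL N f) {k : ℤ}
    (hk : N < |k|) :
    ∫ x in (0:ℝ)..1,
      f x * Complex.exp (-(2 * (Real.pi : ℂ) * Complex.I * (k : ℂ) * (x : ℂ))) = 0 := by
  obtain ⟨d, hd⟩ := hf
  have hcong : ∀ x ∈ Set.uIcc (0:ℝ) 1,
      f x * Complex.exp (-(2 * (Real.pi : ℂ) * Complex.I * (k : ℂ) * (x : ℂ)))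
      = ∑ m ∈ Finset.Icc (-N) N, d m *
          Complex.exp (2 * (Real.pi : ℂ) * Complex.I * ((m - k : ℤ) : ℂ) * (x : ℂ)) := by
    intro x _
    rw [hd x, Finset.sum_mul]
    refine Finset.sum_congr rfl fun m _ => ?_
    rw [mul_assoc, ← Complex.exp_add]
    push_cast
    ring_nf
  rw [intervalIntegral.integral_congr hcong]
  have hint : ∀ m ∈ Finset.Icc (-N) N, IntervalIntegrable
      (fun x : ℝ => d m * Complex.exp (2 * (Real.pi : ℂ) * Complex.I * ((m - k : ℤ) : ℂ) * (x : ℂ)))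
      MeasureTheory.volume 0 1 := by
    intro m _
    apply Continuous.intervalIntegrable
    exact continuous_const.mul (Complex.continuous_exp.comp (by continuity))
  rw [intervalIntegral.integral_finset_sum hint]
  refine Finset.sum_eq_zero fun m hm => ?_
  rw [intervalIntegral.integral_const_mul, integral_exp_eq_zero, mul_zero]
  simp only [Finset.mem_Icc] at hm
  rcases abs_cases k with ⟨h1, h2⟩ | ⟨h1, h2⟩ <;> rw [h1] at hk <;> omega






/-- the complex trig polynomial -/
def S (B : ℕ) (c : ℤ → ℂ) : ℝ → ℂ := fun x =>
  ∑ k ∈ Finset.Icc (-(B : ℤ)) (B : ℤ),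
    c k * Complex.exp (2 * (Real.pi : ℂ) * Complex.I * (k : ℂ) * (x : ℂ))

/-- its derivative -/
def S' (B : ℕ) (c : ℤ → ℂ) : ℝ → ℂ := fun x =>
  ∑ k ∈ Finset.Icc (-(B : ℤ)) (B : ℤ),
    (c k * (2 * (Real.pi : ℂ) * Complex.I * (k : ℂ))) *
      Complex.exp (2 * (Real.pi : ℂ) * Complex.I * (k : ℂ) * (x : ℂ))

theorem hasDerivAt_S (B : ℕ) (c : ℤ → ℂ) (x : ℝ) :
    HasDerivAt (S B c) (S' B c x) x := by
  apply HasDerivAt.fun_sum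
  intro k _
  have h1 : HasDerivAt (fun w : ℂ => Complex.exp (2 * (Real.pi : ℂ) * Complex.I * (k : ℂ) * w))
      (Complex.exp (2 * (Real.pi : ℂ) * Complex.I * (k : ℂ) * ((x : ℝ) : ℂ)) *
        (2 * (Real.pi : ℂ) * Complex.I * (k : ℂ) * 1)) ((x : ℝ) : ℂ) :=
    ((hasDerivAt_id _).const_mul (2 * (Real.pi : ℂ) * Complex.I * (k : ℂ))).cexp
  have h2 := (h1.comp_ofReal).const_mul (c k)
  convert h2 using 1
  · rfl
  · ring

theorem S_cont (B : ℕ) (c : ℤ → ℂ) : Continuous (S B c) := by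
  apply continuous_finset_sum
  intro k _
  exact continuous_const.mul (Complex.continuous_exp.comp (by continuity))

theorem S'_cont (B : ℕ) (c : ℤ → ℂ) : Continuous (S' B c) := by
  apply continuous_finset_sum
  intro k _
  exact continuous_const.mul (Complex.continuous_exp.comp (by continuity))

section withz

variable {B : ℕ} {c : ℤ → ℂ} {z : ℝ → ℝ}
  (hz : ∀ x : ℝ, (z x : ℂ) =
      ∑ k ∈ Finset.Icc (-(B : ℤ)) (B : ℤ),
        c k * Complex.exp (2 * (Real.pi : ℂ) * Complex.I * (k : ℂ) * (x : ℂ)))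

include hz

theorem z_eq : z = fun x => (S B c x).re := by
  funext x
  rw [← Complex.ofReal_re (z x), hz x]; rfl

theorem z_hasDerivAt (x : ℝ) : HasDerivAt z ((S' B c x).re) x := by
  rw [z_eq hz]
  exact Complex.reCLM.hasFDerivAt.comp_hasDerivAt x (hasDerivAt_S B c x)

theorem z_cont : Continuous z := by
  rw [z_eq hz]; exact Complex.continuous_re.comp (S_cont B c)

theorem deriv_z : deriv z = fun x => (S' B c x).re := by
  funext x; exact (z_hasDerivAt hz x).deriv

theorem deriv_z_cont : Continuous (deriv z) := by
  rw [deriv_z hz]; exact Complex.continuous_re.comp (S'_cont B c)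

end withz

/-- auxiliary polynomial whose roots on the unit circle control zeros of `deriv z` -/
def Q (B : ℕ) (c : ℤ → ℂ) : Polynomial ℂ :=
  ∑ k ∈ Finset.Icc (-(B : ℤ)) (B : ℤ),
    (Polynomial.C (c k * (2 * (Real.pi : ℂ) * Complex.I * (k : ℂ))) *
        Polynomial.X ^ (k + (B : ℤ)).toNat +
      Polynomial.C ((starRingEnd ℂ) (c k * (2 * (Real.pi : ℂ) * Complex.I * (k : ℂ)))) *
        Polynomial.X ^ ((B : ℤ) - k).toNat)

theorem Q_eval (B : ℕ) (c : ℤ → ℂ) (x : ℝ) :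
    (Q B c).eval (Complex.exp (2 * (Real.pi : ℂ) * Complex.I * (x : ℂ))) =
      ((2 * (S' B c x).re : ℝ) : ℂ) *
        Complex.exp (2 * (Real.pi : ℂ) * Complex.I * (x : ℂ)) ^ (B : ℕ) := by
  set t : ℂ := 2 * (Real.pi : ℂ) * Complex.I * (x : ℂ) with ht
  set w : ℂ := Complex.exp t with hwdef
  have hw : w ≠ 0 := Complex.exp_ne_zero t
  have hconj_t : (starRingEnd ℂ) t = -t := by
    rw [ht]
    simp only [map_mul, Complex.conj_I, Complex.conj_ofReal, map_ofNat]
    ring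
  have hconj_w : (starRingEnd ℂ) w = w⁻¹ := by
    rw [hwdef, ← Complex.exp_conj, hconj_t, Complex.exp_neg]
  have hk_exp : ∀ k : ℤ, Complex.exp (2 * (Real.pi : ℂ) * Complex.I * (k : ℂ) * (x : ℂ))
      = w ^ k := by
    intro k
    rw [show (2 * (Real.pi : ℂ) * Complex.I * (k : ℂ) * (x : ℂ)) = (k : ℂ) * t by rw [ht]; ring]
    exact Complex.exp_int_mul t k
  have hre : ((2 * (S' B c x).re : ℝ) : ℂ) = S' B c x + (starRingEnd ℂ) (S' B c x) := by
    rw [Complex.add_conj] <;> norm_cast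
  rw [hre]
  simp only [S', hk_exp]
  rw [map_sum]
  rw [add_mul, Finset.sum_mul, Finset.sum_mul, ← Finset.sum_add_distrib]
  rw [Q, Polynomial.eval_finset_sum]
  refine Finset.sum_congr rfl fun k hk => ?_
  simp only [Finset.mem_Icc] at hk
  have h1 : (0:ℤ) ≤ k + (B:ℤ) := by omega
  have h2 : (0:ℤ) ≤ (B:ℤ) - k := by omega
  simp only [Polynomial.eval_add, Polynomial.eval_mul, Polynomial.eval_C, Polynomial.eval_pow,
    Polynomial.eval_X, map_mul]
  simp only [map_zpow₀, hconj_w]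
  congr 1
  · rw [← zpow_natCast w (k + (B:ℤ)).toNat, Int.toNat_of_nonneg h1,
      ← zpow_natCast w B, zpow_add₀ hw]
    ring
  · rw [← zpow_natCast w ((B:ℤ) - k).toNat, Int.toNat_of_nonneg h2,
      ← zpow_natCast w B, zpow_sub₀ hw, inv_zpow]
    ring

section cases

variable {B : ℕ} {c : ℤ → ℂ} {z : ℝ → ℝ}
  (hz : ∀ x : ℝ, (z x : ℂ) =
      ∑ k ∈ Finset.Icc (-(B : ℤ)) (B : ℤ),
        c k * Complex.exp (2 * (Real.pi : ℂ) * Complex.I * (k : ℂ) * (x : ℂ)))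

include hz

theorem z_const_of_Q_zero (hQ : Q B c = 0) : ∀ x : ℝ, z x = z 0 := by
  have hder : ∀ x : ℝ, deriv z x = 0 := by
    intro x
    have := Q_eval B c x
    rw [hQ, Polynomial.eval_zero] at this
    have hw : Complex.exp (2 * (Real.pi : ℂ) * Complex.I * (x : ℂ)) ^ (B:ℕ) ≠ 0 :=
      pow_ne_zero _ (Complex.exp_ne_zero _)
    have h2 : ((2 * (S' B c x).re : ℝ) : ℂ) = 0 := by
      rcases mul_eq_zero.mp this.symm with h | h
      · exact h
      · exact absurd h hw
    have h3 : (2 * (S' B c x).re : ℝ) = 0 := by exact_mod_cast h2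
    have h4 : (S' B c x).re = 0 := by linarith
    rw [deriv_z hz]
    exact h4
  intro x
  exact is_const_of_deriv_eq_zero (fun y => (z_hasDerivAt hz y).differentiableAt) hder x 0

theorem K_finite_of_Q_ne (hQ : Q B c ≠ 0) :
    Set.Finite {x : ℝ | x ∈ Set.Icc (0:ℝ) 1 ∧ deriv z x = 0} := by
  set K := {x : ℝ | x ∈ Set.Icc (0:ℝ) 1 ∧ deriv z x = 0}
  have hroots : Set.Finite {v : ℂ | (Q B c).IsRoot v} := Polynomial.finite_setOf_isRoot hQ
  have hmap : ∀ x ∈ K, (Q B c).IsRoot (Complex.exp (2 * (Real.pi : ℂ) * Complex.I * (x : ℂ))) := by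
    intro x hx
    have hd : (S' B c x).re = 0 := by
      have := hx.2; rwa [deriv_z hz] at this
    unfold Polynomial.IsRoot
    rw [Q_eval B c x, hd]
    norm_num
  have hinj : Set.InjOn (fun x : ℝ => Complex.exp (2 * (Real.pi : ℂ) * Complex.I * (x : ℂ)))
      (Set.Ico (0:ℝ) 1) := by
    intro x hx y hy hxy
    simp only at hxy
    rw [Complex.exp_eq_exp_iff_exists_int] at hxy
    obtain ⟨n, hn⟩ := hxy
    have hne : (2 * (Real.pi:ℂ) * Complex.I) ≠ 0 := by
      simp [Real.pi_ne_zero, Complex.I_ne_zero]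
    have h2 : 2 * (Real.pi:ℂ) * Complex.I * (x:ℂ)
        = 2 * (Real.pi:ℂ) * Complex.I * ((y:ℂ) + (n:ℂ)) := by rw [hn]; ring
    have h3 := mul_left_cancel₀ hne h2
    have h4 : x = y + (n:ℝ) := by exact_mod_cast h3
    have hx0 := hx.1; have hx1 := hx.2; have hy0 := hy.1; have hy1 := hy.2
    have h5 : -1 < (n:ℝ) := by linarith
    have h6 : (n:ℝ) < 1 := by linarith
    have hn0 : n = 0 := by
      have h7 : -1 < n := by exact_mod_cast h5
      have h8 : n < 1 := by exact_mod_cast h6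
      omega
    rw [hn0] at h4
    simpa using h4
  have hsub : K ⊆ (K ∩ Set.Ico (0:ℝ) 1) ∪ {(1:ℝ)} := by
    intro x hx
    rcases eq_or_lt_of_le hx.1.2 with h | h
    · exact Or.inr (by simp [h])
    · exact Or.inl ⟨hx, hx.1.1, h⟩
  have hfin1 : (K ∩ Set.Ico (0:ℝ) 1).Finite := by
    apply Set.Finite.of_finite_image ?_ (hinj.mono Set.inter_subset_right)
    apply hroots.subset
    rintro v ⟨x, hx, rfl⟩
    exact hmap x hx.1
  exact (hfin1.union (Set.finite_singleton 1)).subset hsub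

end cases






/-- Claim B: a differentiable function maps null sets to null sets. -/
theorem image_null {z : ℝ → ℝ} (hder : ∀ x : ℝ, HasDerivAt z (deriv z x) x)
    {N : Set ℝ} (hN : MeasurableSet N) (hN0 : volume N = 0) :
    volume (z '' N) = 0 := by
  have h := MeasureTheory.addHaar_image_le_lintegral_abs_det_fderiv volume hN
    (f' := fun x => ContinuousLinearMap.smulRight (1 : ℝ →L[ℝ] ℝ) (deriv z x))
    (fun x _ => ((hder x).hasFDerivAt).hasFDerivWithinAt)
  simp only [ContinuousLinearMap.det_smulRight, ContinuousLinearMap.one_apply, one_mul] at h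
  refine le_antisymm (h.trans ?_) zero_le
  rw [MeasureTheory.setLIntegral_measure_zero _ _ hN0]

/-- Claim A: away from finitely many critical points, preimages of null sets are null. -/
theorem preimage_null {z : ℝ → ℝ} (hder : ∀ x : ℝ, HasDerivAt z (deriv z x) x)
    (hz : Continuous z) (hz' : Continuous (deriv z))
    (hK : Set.Finite {x : ℝ | x ∈ Set.Icc (0:ℝ) 1 ∧ deriv z x = 0})
    {M : Set ℝ} (hM : MeasurableSet M) (hM0 : volume M = 0) :
    volume (z ⁻¹' M ∩ Set.Icc (0:ℝ) 1) = 0 := by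
  classical
  set K := {x : ℝ | x ∈ Set.Icc (0:ℝ) 1 ∧ deriv z x = 0} with hKdef
  have hpiece : ∀ q1 q2 : ℚ, (∀ y ∈ Set.Icc (q1:ℝ) q2, deriv z y ≠ 0) →
      volume (z ⁻¹' M ∩ Set.Icc (q1:ℝ) q2) = 0 := by
    intro q1 q2 hgood
    set s := z ⁻¹' M ∩ Set.Icc (q1:ℝ) q2 with hsdef
    have hs : MeasurableSet s := (hM.preimage hz.measurable).inter measurableSet_Icc
    have hinj : Set.InjOn z (Set.Icc (q1:ℝ) q2) := by
      rcases Classical.em (∀ y ∈ Set.Icc (q1:ℝ) q2, 0 < deriv z y) with hpos | hnpos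
      · exact (strictMonoOn_of_deriv_pos (convex_Icc _ _) hz.continuousOn
          (fun y hy => hpos y (interior_subset hy))).injOn
      · push_neg at hnpos
        obtain ⟨y0, hy0, hy0'⟩ := hnpos
        have hy0neg : deriv z y0 < 0 := lt_of_le_of_ne hy0' (hgood y0 hy0)
        have hneg : ∀ y ∈ Set.Icc (q1:ℝ) q2, deriv z y < 0 := by
          intro y hy
          by_contra hcon
          push_neg at hcon
          have hypos : 0 < deriv z y := lt_of_le_of_ne hcon (Ne.symm (hgood y hy))
          have h0mem : (0:ℝ) ∈ Set.uIcc (deriv z y0) (deriv z y) :=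
            Set.mem_uIcc.mpr (Or.inl ⟨le_of_lt hy0neg, le_of_lt hypos⟩)
          obtain ⟨y1, hy1, hy1'⟩ := intermediate_value_uIcc
            (hz'.continuousOn : ContinuousOn (deriv z) (Set.uIcc y0 y)) h0mem
          exact hgood y1 (Set.uIcc_subset_Icc hy0 hy hy1) hy1'
        exact (strictAntiOn_of_deriv_neg (convex_Icc _ _) hz.continuousOn
          (fun y hy => hneg y (interior_subset hy))).injOn
    have hinj' : Set.InjOn z s := hinj.mono Set.inter_subset_right
    have heq := MeasureTheory.lintegral_abs_det_fderiv_eq_addHaar_image volume hs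
      (f' := fun x => ContinuousLinearMap.smulRight (1 : ℝ →L[ℝ] ℝ) (deriv z x))
      (fun x _ => ((hder x).hasFDerivAt).hasFDerivWithinAt) hinj'
    simp only [ContinuousLinearMap.det_smulRight, ContinuousLinearMap.one_apply, one_mul] at heq
    have himg : volume (z '' s) = 0 := by
      refine measure_mono_null ?_ hM0
      rintro v ⟨x, hx, rfl⟩
      exact hx.1
    rw [himg] at heq
    have hae := (MeasureTheory.lintegral_eq_zero_iff
        (μ := volume.restrict s) (f := fun x => ENNReal.ofReal |deriv z x|)
        (ENNReal.measurable_ofReal.comp (hz'.measurable.abs))).mp heq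
    have hnm : ∀ᵐ x ∂(volume.restrict s), x ∉ s := by
      filter_upwards [hae] with x hx
      simp only [Pi.zero_apply] at hx
      intro hxs
      rw [ENNReal.ofReal_eq_zero] at hx
      have : 0 < |deriv z x| := abs_pos.mpr (hgood x hxs.2)
      linarith
    have h2 := (MeasureTheory.ae_restrict_iff' hs).mp hnm
    have h3 : ∀ᵐ x ∂(volume : Measure ℝ), x ∉ s := by
      filter_upwards [h2] with x hx
      intro hxs
      exact hx hxs hxs
    exact measure_eq_zero_iff_ae_notMem.mpr h3
  -- covering of the non-critical part by good rational intervals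
  set U : ℚ → ℚ → Set ℝ := fun q1 q2 =>
    if (∀ y ∈ Set.Icc (q1:ℝ) q2, deriv z y ≠ 0) then z ⁻¹' M ∩ Set.Icc (q1:ℝ) q2 else ∅
    with hUdef
  have hUnull : ∀ q1 q2, volume (U q1 q2) = 0 := by
    intro q1 q2
    rw [hUdef]
    beta_reduce
    by_cases h : (∀ y ∈ Set.Icc (q1:ℝ) q2, deriv z y ≠ 0)
    · rw [if_pos h]; exact hpiece q1 q2 h
    · rw [if_neg h]; exact measure_empty
  have hcover : (z ⁻¹' M ∩ Set.Icc (0:ℝ) 1) \ K ⊆ ⋃ (q1 : ℚ) (q2 : ℚ), U q1 q2 := by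
    intro x hx
    have hxIcc : x ∈ Set.Icc (0:ℝ) 1 := hx.1.2
    have hxd : deriv z x ≠ 0 := by
      intro h0
      exact hx.2 ⟨hxIcc, h0⟩
    have hopen : IsOpen ((deriv z) ⁻¹' {(0:ℝ)}ᶜ) := (isOpen_compl_singleton).preimage hz'
    obtain ⟨δ, hδpos, hball⟩ := Metric.isOpen_iff.mp hopen x hxd
    obtain ⟨q1, hq1a, hq1b⟩ := exists_rat_btwn (by linarith : x - δ < x)
    obtain ⟨q2, hq2a, hq2b⟩ := exists_rat_btwn (by linarith : x < x + δ)
    refine Set.mem_iUnion.mpr ⟨q1, Set.mem_iUnion.mpr ⟨q2, ?_⟩⟩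
    have hgood : ∀ y ∈ Set.Icc (q1:ℝ) q2, deriv z y ≠ 0 := by
      intro y hy
      have : y ∈ Metric.ball x δ := by
        rw [Metric.mem_ball, Real.dist_eq, abs_sub_lt_iff]
        constructor <;> [linarith [hy.2]; linarith [hy.1]]
      exact hball this
    rw [hUdef]
    simp only [if_pos hgood]
    exact ⟨hx.1.1, ⟨le_of_lt hq1b, le_of_lt hq2a⟩⟩
  have hbig : volume ((z ⁻¹' M ∩ Set.Icc (0:ℝ) 1) \ K) = 0 :=
    measure_mono_null hcover
      (measure_iUnion_null fun q1 => measure_iUnion_null fun q2 => hUnull q1 q2)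
  have : z ⁻¹' M ∩ Set.Icc (0:ℝ) 1 ⊆ ((z ⁻¹' M ∩ Set.Icc (0:ℝ) 1) \ K) ∪ K := by
    intro x hx
    by_cases h : x ∈ K
    · exact Or.inr h
    · exact Or.inl ⟨hx, h⟩
  exact measure_mono_null this (measure_union_null hbig (hK.measure_zero _))

/-- the measurable selection: least preimage in `[0,1]` -/
def tau (z : ℝ → ℝ) : ℝ → ℝ := fun t => sInf {x : ℝ | x ∈ Set.Icc (0:ℝ) 1 ∧ z x = t}

theorem tau_spec {z : ℝ → ℝ} (hz : Continuous z) {t : ℝ} (ht : t ∈ z '' Set.Icc (0:ℝ) 1) :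
    tau z t ∈ Set.Icc (0:ℝ) 1 ∧ z (tau z t) = t := by
  set s := {x : ℝ | x ∈ Set.Icc (0:ℝ) 1 ∧ z x = t} with hsdef
  have hne : s.Nonempty := by
    obtain ⟨x, hx, hxt⟩ := ht
    exact ⟨x, hx, hxt⟩
  have hclosed : IsClosed s := by
    have : s = Set.Icc (0:ℝ) 1 ∩ z ⁻¹' {t} := by
      ext x; simp [hsdef, Set.mem_preimage]
    rw [this]
    exact isClosed_Icc.inter (isClosed_singleton.preimage hz)
  have hbdd : BddBelow s := ⟨0, fun x hx => hx.1.1⟩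
  have := hclosed.csInf_mem hne hbdd
  exact ⟨this.1, this.2⟩

theorem tau_measurable {z : ℝ → ℝ} (hz : Continuous z) : Measurable (tau z) := by
  apply measurable_of_Iic
  intro a
  have hset : tau z ⁻¹' (Set.Iic a) =
      (z '' (Set.Icc (0:ℝ) 1 ∩ Set.Iic a)) ∪
        (if (0:ℝ) ≤ a then (z '' Set.Icc (0:ℝ) 1)ᶜ else ∅) := by
    ext t
    by_cases htR : t ∈ z '' Set.Icc (0:ℝ) 1
    · simp only [Set.mem_preimage, Set.mem_Iic, Set.mem_union]
      constructor
      · intro hta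
        left
        refine ⟨tau z t, ⟨(tau_spec hz htR).1, hta⟩, (tau_spec hz htR).2⟩
      · intro h
        rcases h with ⟨x, ⟨hxI, hxa⟩, hxt⟩ | h
        · have hle : tau z t ≤ x := csInf_le ⟨0, fun y hy => hy.1.1⟩ ⟨hxI, hxt⟩
          exact le_trans hle hxa
        · exfalso
          by_cases h0 : (0:ℝ) ≤ a
          · rw [if_pos h0] at h; exact h htR
          · rw [if_neg h0] at h; exact h
    · have hempty : {x : ℝ | x ∈ Set.Icc (0:ℝ) 1 ∧ z x = t} = ∅ := by
        ext x
        simp only [Set.mem_setOf_eq, Set.mem_empty_iff_false, iff_false]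
        rintro ⟨hxI, hxt⟩
        exact htR ⟨x, hxI, hxt⟩
      have htau : tau z t = 0 := by
        rw [tau, hempty, Real.sInf_empty]
      simp only [Set.mem_preimage, Set.mem_Iic, htau, Set.mem_union]
      constructor
      · intro h0a
        right
        rw [if_pos h0a]
        exact htR
      · intro h
        rcases h with ⟨x, ⟨hxI, _⟩, hxt⟩ | h
        · exact absurd ⟨x, hxI, hxt⟩ htR
        · by_cases h0 : (0:ℝ) ≤ a
          · exact h0
          · rw [if_neg h0] at h; exact absurd h (Set.notMem_empty t)
  rw [hset]
  have hc1 : IsCompact (Set.Icc (0:ℝ) 1 ∩ Set.Iic a) := isCompact_Icc.inter_right isClosed_Iic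
  have hm1 : MeasurableSet (z '' (Set.Icc (0:ℝ) 1 ∩ Set.Iic a)) :=
    ((hc1.image hz).isClosed).measurableSet
  have hm2 : MeasurableSet (z '' Set.Icc (0:ℝ) 1) :=
    (((isCompact_Icc).image hz).isClosed).measurableSet
  refine hm1.union ?_
  by_cases h0 : (0:ℝ) ≤ a
  · rw [if_pos h0]; exact hm2.compl
  · rw [if_neg h0]; exact MeasurableSet.empty

/-- Claim C: transfer of a.e. strong measurability through the pushforward, nonconstant case. -/
theorem transfer {z : ℝ → ℝ} {φ : ℝ → ℝ}
    (hz : Continuous z)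
    (hAC : ∀ M : Set ℝ, MeasurableSet M → volume M = 0 →
      volume (z ⁻¹' M ∩ Set.Icc (0:ℝ) 1) = 0)
    (himg : ∀ N : Set ℝ, MeasurableSet N → volume N = 0 → volume (z '' N) = 0)
    (hASM : AEStronglyMeasurable (fun x => φ (z x)) (volume.restrict (Set.Icc (0:ℝ) 1))) :
    AEStronglyMeasurable φ (Measure.map z (volume.restrict (Set.Icc (0:ℝ) 1))) := by
  set μ := volume.restrict (Set.Icc (0:ℝ) 1) with hμdef
  set g := hASM.mk _ with hgdef
  have hgsm : StronglyMeasurable g := hASM.stronglyMeasurable_mk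
  have hgae : (fun x => φ (z x)) =ᵐ[μ] g := hASM.ae_eq_mk
  have hEnull : μ {x : ℝ | ¬ (φ (z x) = g x)} = 0 := hgae
  obtain ⟨E2, hE2sub, hE2meas, hE2null⟩ := exists_measurable_superset_of_null hEnull
  set N2 := E2 ∩ Set.Icc (0:ℝ) 1 with hN2def
  have hN2meas : MeasurableSet N2 := hE2meas.inter measurableSet_Icc
  have hN2null : volume N2 = 0 := by
    have := Measure.restrict_apply hE2meas (μ := volume) (s := Set.Icc (0:ℝ) 1)
    rw [hμdef] at hE2null
    rw [← this]
    exact hE2null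
  set φ' : ℝ → ℝ := fun t => if z (tau z t) = t then g (tau z t) else 0 with hφ'def
  have hφ'm : StronglyMeasurable φ' := by
    apply Measurable.stronglyMeasurable
    exact Measurable.ite
      (measurableSet_eq_fun (hz.measurable.comp (tau_measurable hz)) measurable_id)
      (hgsm.measurable.comp (tau_measurable hz)) measurable_const
  refine ⟨φ', hφ'm, ?_⟩
  -- null sets
  set Rg := z '' Set.Icc (0:ℝ) 1 with hRgdef
  have hRgmeas : MeasurableSet Rg := (((isCompact_Icc).image hz).isClosed).measurableSet
  set W := tau z ⁻¹' N2 with hWdef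
  have hWmeas : MeasurableSet W := hN2meas.preimage (tau_measurable hz)
  have hzm : Measurable z := hz.measurable
  have hRgc_null : Measure.map z μ Rgᶜ = 0 := by
    rw [Measure.map_apply hzm hRgmeas.compl, hμdef,
      Measure.restrict_apply (hRgmeas.compl.preimage hzm)]
    have hem : z ⁻¹' Rgᶜ ∩ Set.Icc (0:ℝ) 1 = ∅ := by
      ext x
      simp only [Set.mem_inter_iff, Set.mem_preimage, Set.mem_compl_iff,
        Set.mem_empty_iff_false, iff_false, not_and]
      intro hnot hxI
      exact hnot ⟨x, hxI, rfl⟩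
    rw [hem]
    exact measure_empty
  have hW_null : Measure.map z μ W = 0 := by
    rw [Measure.map_apply hzm hWmeas, hμdef,
      Measure.restrict_apply (hWmeas.preimage hzm)]
    obtain ⟨M2, hM2sub, hM2meas, hM2null⟩ :=
      exists_measurable_superset_of_null (himg N2 hN2meas hN2null)
    refine measure_mono_null ?_ (hAC M2 hM2meas hM2null)
    intro x hx
    have hxI : x ∈ Set.Icc (0:ℝ) 1 := hx.2
    have htau := tau_spec hz (⟨x, hxI, rfl⟩ : z x ∈ z '' Set.Icc (0:ℝ) 1)
    refine ⟨?_, hxI⟩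
    show z x ∈ M2
    rw [← htau.2]
    exact hM2sub ⟨tau z (z x), hx.1, rfl⟩
  have hsub : {t : ℝ | ¬ (φ t = φ' t)} ⊆ Rgᶜ ∪ W := by
    intro t ht
    by_cases htR : t ∈ Rg
    · right
      by_contra hW'
      apply ht
      have htau := tau_spec hz htR
      have hzt : z (tau z t) = t := htau.2
      have hphi' : φ' t = g (tau z t) := by rw [hφ'def]; simp [hzt]
      rw [hphi']
      have hnotE2 : tau z t ∉ E2 := by
        intro hE
        exact hW' (by exact ⟨hE, htau.1⟩)
      have hgeq : φ (z (tau z t)) = g (tau z t) := by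
        by_contra hne
        exact hnotE2 (hE2sub hne)
      rw [← hgeq, hzt]
    · left; exact htR
  have hnull : Measure.map z μ {t : ℝ | ¬ (φ t = φ' t)} = 0 :=
    measure_mono_null hsub (measure_union_null hRgc_null hW_null)
  exact ae_iff.mpr hnull

/-- Claim C, constant case. -/
theorem transfer_const {z : ℝ → ℝ} {φ : ℝ → ℝ} (hconst : ∀ x : ℝ, z x = z 0) :
    AEStronglyMeasurable φ (Measure.map z (volume.restrict (Set.Icc (0:ℝ) 1))) := by
  set μ := volume.restrict (Set.Icc (0:ℝ) 1) with hμdef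
  have hmapeq : Measure.map z μ = Measure.map (fun _ => z 0) μ :=
    Measure.map_congr (Filter.Eventually.of_forall hconst)
  rw [hmapeq, Measure.map_const]
  refine ⟨fun _ => φ (z 0), stronglyMeasurable_const, ?_⟩
  apply ae_iff.mpr
  rw [Measure.smul_apply]
  have hsub : {t : ℝ | ¬ (φ t = (fun _ => φ (z 0)) t)} ⊆ {z 0}ᶜ := by
    intro t ht
    simp only [Set.mem_setOf_eq] at ht
    simp only [Set.mem_compl_iff, Set.mem_singleton_iff]
    intro h
    exact ht (by rw [h])
  have hd : Measure.dirac (z 0) {t : ℝ | ¬ (φ t = (fun _ => φ (z 0)) t)} = 0 := by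
    refine measure_mono_null hsub ?_
    rw [Measure.dirac_apply' _ (measurableSet_singleton (z 0)).compl]
    simp
  rw [hd, smul_zero]







theorem liftIoc_aesm {gC : ℝ → ℂ}
    (hgm : AEStronglyMeasurable gC (volume.restrict (Set.Icc (0:ℝ) 1))) :
    AEStronglyMeasurable (AddCircle.liftIoc (1:ℝ) 0 gC) (volume : Measure (AddCircle (1:ℝ))) := by
  have hJsub : Set.Ioc (0:ℝ) (0 + 1) ⊆ Set.Icc (0:ℝ) 1 := by
    rw [zero_add]; exact Set.Ioc_subset_Icc_self
  have hgm' : AEStronglyMeasurable gC (volume.restrict (Set.Ioc (0:ℝ) (0 + 1))) :=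
    hgm.mono_measure (Measure.restrict_mono hJsub le_rfl)
  set g₀ := hgm'.mk gC with hg₀def
  have hg₀sm : StronglyMeasurable g₀ := hgm'.stronglyMeasurable_mk
  have hae : gC =ᵐ[volume.restrict (Set.Ioc (0:ℝ) (0 + 1))] g₀ := hgm'.ae_eq_mk
  have hbadnull : volume.restrict (Set.Ioc (0:ℝ) (0 + 1)) {x : ℝ | ¬ (gC x = g₀ x)} = 0 := hae
  obtain ⟨E2, hE2sub, hE2meas, hE2null⟩ := exists_measurable_superset_of_null hbadnull
  set bad₂ := E2 ∩ Set.Ioc (0:ℝ) (0 + 1) with hbad₂def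
  have hbad₂meas : MeasurableSet bad₂ := hE2meas.inter measurableSet_Ioc
  have hbad₂null : volume bad₂ = 0 := by
    rw [← Measure.restrict_apply hE2meas]
    exact hE2null
  set e := AddCircle.measurableEquivIoc (1:ℝ) 0 with hedef
  set G₀ := AddCircle.liftIoc (1:ℝ) 0 g₀ with hG₀def
  have hG₀eq : G₀ = (g₀ ∘ Subtype.val) ∘ e := rfl
  have hG₀m : Measurable G₀ := by
    rw [hG₀eq]
    exact (hg₀sm.measurable.comp measurable_subtype_coe).comp e.measurable
  have hval : ∀ q : AddCircle (1:ℝ), ((((e q) : Set.Ioc (0:ℝ) (0+1)) : ℝ) : AddCircle (1:ℝ)) = q := by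
    intro q
    exact (AddCircle.equivIoc (1:ℝ) 0).symm_apply_apply q
  set E' := e ⁻¹' (Subtype.val ⁻¹' bad₂) with hE'def
  have hE'meas : MeasurableSet E' :=
    (hbad₂meas.preimage measurable_subtype_coe).preimage e.measurable
  have hidlift : ∀ q : AddCircle (1:ℝ), AddCircle.liftIoc (1:ℝ) 0 (id : ℝ → ℝ) q = ((e q : Set.Ioc (0:ℝ) (0+1)) : ℝ) := fun q => rfl
  have hE'null : volume E' = 0 := by
    rw [AddCircle.add_projection_respects_measure (1:ℝ) 0 hE'meas]
    refine measure_mono_null ?_ hbad₂null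
    intro x hx
    obtain ⟨hx1, hx2⟩ := hx
    have hxIoc : x ∈ Set.Ioc (0:ℝ) (0 + 1) := hx2
    have hxval : ((e ((x : ℝ) : AddCircle (1:ℝ)) : Set.Ioc (0:ℝ) (0+1)) : ℝ) = x := by
      rw [← hidlift]
      exact AddCircle.liftIoc_coe_apply hxIoc
    have : ((x : ℝ) : AddCircle (1:ℝ)) ∈ E' := hx1
    rw [hE'def] at this
    simp only [Set.mem_preimage] at this
    rwa [hxval] at this
  have hsub : {q : AddCircle (1:ℝ) | ¬ (AddCircle.liftIoc (1:ℝ) 0 gC q = G₀ q)} ⊆ E' := by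
    intro q hq
    set x := ((e q : Set.Ioc (0:ℝ) (0+1)) : ℝ) with hxdef
    have hxIoc : x ∈ Set.Ioc (0:ℝ) (0 + 1) := (e q).2
    have hqx : ((x : ℝ) : AddCircle (1:ℝ)) = q := hval q
    have hGq : AddCircle.liftIoc (1:ℝ) 0 gC q = gC x := by
      rw [← hqx]; exact AddCircle.liftIoc_coe_apply hxIoc
    have hG₀q : G₀ q = g₀ x := by
      rw [hG₀def, ← hqx]; exact AddCircle.liftIoc_coe_apply hxIoc
    have hxbad : x ∈ E2 := hE2sub (by
      simp only [Set.mem_setOf_eq]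
      intro hcon
      exact hq (by rw [hGq, hG₀q, hcon]))
    exact Set.mem_preimage.mpr (Set.mem_preimage.mpr ⟨hxbad, hxIoc⟩)
  exact ⟨G₀, hG₀m.stronglyMeasurable, ae_iff.mpr (measure_mono_null hsub hE'null)⟩

theorem volume_eq_haar_unit : (volume : Measure (AddCircle (1:ℝ))) = haarAddCircle := by
  rw [volume_eq_smul_haarAddCircle]
  simp

theorem liftIoc_memLp {gC : ℝ → ℂ}
    (hg : MemLp gC 2 (volume.restrict (Set.Icc (0:ℝ) 1))) :
    MemLp (AddCircle.liftIoc (1:ℝ) 0 gC) 2 (haarAddCircle : Measure (AddCircle (1:ℝ))) := by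
  have hasm : AEStronglyMeasurable (AddCircle.liftIoc (1:ℝ) 0 gC) (volume : Measure (AddCircle (1:ℝ))) :=
    liftIoc_aesm hg.1
  have hasm' : AEStronglyMeasurable (AddCircle.liftIoc (1:ℝ) 0 gC)
      (haarAddCircle : Measure (AddCircle (1:ℝ))) := by
    rw [← volume_eq_haar_unit]; exact hasm
  refine ⟨hasm', ?_⟩
  have h1 : eLpNorm (AddCircle.liftIoc (1:ℝ) 0 gC) 2 (haarAddCircle : Measure (AddCircle (1:ℝ)))
      = eLpNorm (AddCircle.liftIoc (1:ℝ) 0 gC) 2 (volume : Measure (AddCircle (1:ℝ))) := by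
    rw [volume_eq_haar_unit]
  have h2 : (volume : Measure (AddCircle (1:ℝ))) =
      Measure.map ((↑) : ℝ → AddCircle (1:ℝ)) (volume.restrict (Set.Ioc (0:ℝ) (0 + 1))) :=
    (AddCircle.measurePreserving_mk (1:ℝ) 0).map_eq.symm
  have h3 : eLpNorm (AddCircle.liftIoc (1:ℝ) 0 gC) 2 (volume : Measure (AddCircle (1:ℝ)))
      = eLpNorm ((AddCircle.liftIoc (1:ℝ) 0 gC) ∘ ((↑) : ℝ → AddCircle (1:ℝ))) 2
          (volume.restrict (Set.Ioc (0:ℝ) (0 + 1))) := by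
    rw [h2]
    refine eLpNorm_map_measure ?_ (AddCircle.measurable_mk'.aemeasurable)
    rw [← h2]
    exact hasm
  have h4 : eLpNorm ((AddCircle.liftIoc (1:ℝ) 0 gC) ∘ ((↑) : ℝ → AddCircle (1:ℝ))) 2
      (volume.restrict (Set.Ioc (0:ℝ) (0 + 1))) = eLpNorm gC 2
      (volume.restrict (Set.Ioc (0:ℝ) (0 + 1))) := by
    apply eLpNorm_congr_ae
    refine Filter.eventuallyEq_of_mem (self_mem_ae_restrict measurableSet_Ioc) ?_
    intro x hx
    exact AddCircle.liftIoc_coe_apply hx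
  have h5 : eLpNorm gC 2 (volume.restrict (Set.Ioc (0:ℝ) (0 + 1)))
      ≤ eLpNorm gC 2 (volume.restrict (Set.Icc (0:ℝ) 1)) := by
    apply eLpNorm_mono_measure
    apply Measure.restrict_mono _ le_rfl
    rw [zero_add]; exact Set.Ioc_subset_Icc_self
  rw [h1, h3, h4]
  exact lt_of_le_of_lt h5 hg.2

theorem fourierCoeff_liftIoc_integral (gC : ℝ → ℂ) (k : ℤ) :
    fourierCoeff (AddCircle.liftIoc (1:ℝ) 0 gC) k =
      ∫ x in (0:ℝ)..1,
        gC x * Complex.exp (-(2 * (Real.pi : ℂ) * Complex.I * (k : ℂ) * (x : ℂ))) := by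
  rw [fourierCoeff_liftIoc_eq, fourierCoeffOn_eq_integral]
  simp only [fourier_coe_apply, smul_eq_mul, zero_add, sub_zero]
  norm_num
  rw [intervalIntegral.integral_congr (g := fun x =>
    gC x * Complex.exp (-(2 * (Real.pi : ℂ) * Complex.I * (k : ℂ) * (x : ℂ)))) ?_]
  intro x _
  rw [mul_comm]
  norm_num
  push_cast
  ring_nf

theorem fourierCoeff_congr_ae {f g : AddCircle (1:ℝ) → ℂ}
    (h : f =ᵐ[(haarAddCircle : Measure (AddCircle (1:ℝ)))] g) (n : ℤ) :
    fourierCoeff f n = fourierCoeff g n := by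
  unfold fourierCoeff
  apply MeasureTheory.integral_congr_ae
  filter_upwards [h] with t ht
  rw [ht]


end CTEB
-- MAIN THEOREM
/-- If `φ` is within `ε` of a degree-`r` polynomial `p` in `L²(μ)`, where `μ` is the
value distribution of a band-limit-`B` trigonometric polynomial `z` (the pushforward of
Lebesgue measure on `[0,1]` under `z`), then the Fourier tail energy of `φ ∘ z`
beyond frequency `r·B` is at most `ε²`. -/
theorem composed_tail_energy_bound (φ : ℝ → ℝ) (p : Polynomial ℝ) (r : ℕ)
    (hdeg : p.natDegree ≤ r) (B : ℕ) (c : ℤ → ℂ) (z : ℝ → ℝ)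
    (hz : ∀ x : ℝ, (z x : ℂ) =
      ∑ k ∈ Finset.Icc (-(B : ℤ)) (B : ℤ),
        c k * Complex.exp (2 * (Real.pi : ℂ) * Complex.I * (k : ℂ) * (x : ℂ)))
    (hφz : MeasureTheory.MemLp (fun x : ℝ => φ (z x)) 2
      (MeasureTheory.volume.restrict (Set.Icc (0 : ℝ) 1)))
    (ε : ℝ)
    (herr : (∫ t : ℝ, (φ t - p.eval t) ^ 2
        ∂(MeasureTheory.Measure.map z (MeasureTheory.volume.restrict (Set.Icc (0 : ℝ) 1)))) ≤
      ε ^ 2)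
    (a : ℤ → ℂ)
    (ha : ∀ k : ℤ, a k = ∫ x in (0 : ℝ)..1,
      (φ (z x) : ℂ) *
        Complex.exp (-(2 * (Real.pi : ℂ) * Complex.I * (k : ℂ) * (x : ℂ)))) :
    (∑' k : {k : ℤ // ((r : ℤ) * (B : ℤ)) < |k|}, ‖a k.1‖ ^ 2) ≤ ε ^ 2 := by
  classical
  set μ := MeasureTheory.volume.restrict (Set.Icc (0 : ℝ) 1) with hμdef
  have hzc : Continuous z := CTEB.z_cont hz
  have hder : ∀ x : ℝ, HasDerivAt z (deriv z x) x := by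
    intro x
    rw [CTEB.deriv_z hz]
    exact CTEB.z_hasDerivAt hz x
  -- Step 1: a.e. strong measurability of φ w.r.t. the pushforward measure
  have hφASM : MeasureTheory.AEStronglyMeasurable φ (MeasureTheory.Measure.map z μ) := by
    by_cases hQ : CTEB.Q B c = 0
    · exact CTEB.transfer_const (CTEB.z_const_of_Q_zero hz hQ)
    · exact CTEB.transfer hzc
        (fun M hM hM0 => CTEB.preimage_null hder hzc (CTEB.deriv_z_cont hz)
          (CTEB.K_finite_of_Q_ne hz hQ) hM hM0)
        (fun N hN hN0 => CTEB.image_null hder hN hN0) hφz.1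
  have hFASM : MeasureTheory.AEStronglyMeasurable (fun t : ℝ => (φ t - p.eval t) ^ 2)
      (MeasureTheory.Measure.map z μ) := by
    have h1 : MeasureTheory.AEStronglyMeasurable (fun t : ℝ => φ t - p.eval t)
        (MeasureTheory.Measure.map z μ) :=
      hφASM.sub (Polynomial.continuous p).aestronglyMeasurable
    have h2 := h1.mul h1
    have heq : (fun t : ℝ => (φ t - p.eval t) ^ 2)
        = fun t : ℝ => (φ t - p.eval t) * (φ t - p.eval t) := by
      funext t; ring
    rw [heq]
    exact h2
  -- Step 2: the key bound on [0,1]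
  have key : (∫ x in Set.Icc (0:ℝ) 1, (φ (z x) - p.eval (z x)) ^ 2) ≤ ε ^ 2 := by
    have hmi := MeasureTheory.integral_map (φ := z) (μ := μ)
      hzc.measurable.aemeasurable hFASM
    rw [hmi] at herr
    exact herr
  -- Step 3: the L² function on [0,1] and its lift
  set gC : ℝ → ℂ := fun x => ((φ (z x) - p.eval (z x) : ℝ) : ℂ) with hgCdef
  have hPcont : Continuous fun x : ℝ => p.eval (z x) := (Polynomial.continuous p).comp hzc
  obtain ⟨Cb, hCb⟩ := isCompact_Icc.exists_bound_of_continuousOn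
    (hPcont.continuousOn : ContinuousOn (fun x : ℝ => p.eval (z x)) (Set.Icc (0:ℝ) 1))
  have memP : MeasureTheory.MemLp (fun x : ℝ => p.eval (z x)) 2 μ := by
    refine MeasureTheory.MemLp.of_bound hPcont.aestronglyMeasurable Cb ?_
    rw [hμdef]
    exact (MeasureTheory.ae_restrict_iff' measurableSet_Icc).mpr
      (Filter.Eventually.of_forall hCb)
  have memsub : MeasureTheory.MemLp (fun x : ℝ => φ (z x) - p.eval (z x)) 2 μ := hφz.sub memP
  have memgC : MeasureTheory.MemLp gC 2 μ :=
    Complex.isometry_ofReal.lipschitz.comp_memLp (by simp) memsub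
  set G := AddCircle.liftIoc (1:ℝ) 0 gC with hGdef
  have MemG : MeasureTheory.MemLp G 2 (haarAddCircle : Measure (AddCircle (1:ℝ))) :=
    CTEB.liftIoc_memLp memgC
  set f2 := MemG.toLp G with hf2def
  have hf2ae : (f2 : AddCircle (1:ℝ) → ℂ) =ᵐ[(haarAddCircle : Measure (AddCircle (1:ℝ)))] G :=
    MemG.coeFn_toLp
  have hpars := tsum_sq_fourierCoeff f2
  have hcoeff : ∀ n : ℤ, fourierCoeff (f2 : AddCircle (1:ℝ) → ℂ) n = fourierCoeff G n :=
    fun n => CTEB.fourierCoeff_congr_ae hf2ae n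
  -- Step 4: identify the RHS of Parseval
  have hrhs : (∫ t : AddCircle (1:ℝ), ‖(f2 : AddCircle (1:ℝ) → ℂ) t‖ ^ 2 ∂haarAddCircle) ≤ ε ^ 2 := by
    have e1 : (∫ t : AddCircle (1:ℝ), ‖(f2 : AddCircle (1:ℝ) → ℂ) t‖ ^ 2 ∂haarAddCircle)
        = ∫ t : AddCircle (1:ℝ), ‖G t‖ ^ 2 ∂haarAddCircle := by
      apply MeasureTheory.integral_congr_ae
      filter_upwards [hf2ae] with t ht
      rw [ht]
    have e2 : (∫ t : AddCircle (1:ℝ), ‖G t‖ ^ 2 ∂haarAddCircle)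
        = ∫ t : AddCircle (1:ℝ), ‖G t‖ ^ 2 := by
      rw [CTEB.volume_eq_haar_unit]
    have e3 : (∫ t : AddCircle (1:ℝ), ‖G t‖ ^ 2)
        = ∫ x in Set.Ioc (0:ℝ) (0 + 1), ‖G (x : AddCircle (1:ℝ))‖ ^ 2 :=
      (AddCircle.integral_preimage (1:ℝ) 0 _).symm
    have e4 : (∫ x in Set.Ioc (0:ℝ) (0 + 1), ‖G (x : AddCircle (1:ℝ))‖ ^ 2)
        = ∫ x in Set.Ioc (0:ℝ) (0 + 1), (φ (z x) - p.eval (z x)) ^ 2 := by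
      apply MeasureTheory.setIntegral_congr_fun measurableSet_Ioc
      intro x hx
      rw [hGdef]
      simp only
      rw [AddCircle.liftIoc_coe_apply hx, hgCdef]
      simp only [Complex.norm_real, Real.norm_eq_abs]
      exact _root_.sq_abs _
    have e5 : (∫ x in Set.Ioc (0:ℝ) (0 + 1), (φ (z x) - p.eval (z x)) ^ 2)
        = ∫ x in Set.Icc (0:ℝ) 1, (φ (z x) - p.eval (z x)) ^ 2 := by
      rw [zero_add]
      exact (MeasureTheory.integral_Icc_eq_integral_Ioc).symm
    rw [e1, e2, e3, e4, e5]
    exact key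
  -- Step 5: identify the tail coefficients
  have hnorm_exp : ∀ (k : ℤ) (x : ℝ),
      ‖Complex.exp (-(2 * (Real.pi : ℂ) * Complex.I * (k : ℂ) * (x : ℂ)))‖ = 1 := by
    intro k x
    rw [Complex.norm_exp]
    have : (-(2 * (Real.pi : ℂ) * Complex.I * (k : ℂ) * (x : ℂ))).re = 0 := by
      simp [Complex.mul_re, Complex.mul_im]
    rw [this, Real.exp_zero]
  have htail : ∀ k : ℤ, ((r : ℤ) * (B : ℤ)) < |k| → a k = fourierCoeff G k := by
    intro k hk
    rw [ha k, hGdef, CTEB.fourierCoeff_liftIoc_integral gC k]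
    set e : ℝ → ℂ := fun x =>
      Complex.exp (-(2 * (Real.pi : ℂ) * Complex.I * (k : ℂ) * (x : ℂ))) with hedef
    have hcont_e : Continuous e := by
      rw [hedef]; exact Complex.continuous_exp.comp (by continuity)
    have I1 : IntervalIntegrable (fun x => gC x * e x) MeasureTheory.volume 0 1 := by
      rw [intervalIntegrable_iff, Set.uIoc_of_le (zero_le_one : (0:ℝ) ≤ 1)]
      have hgint : MeasureTheory.IntegrableOn gC (Set.Icc (0:ℝ) 1) MeasureTheory.volume :=
        memgC.integrable one_le_two
      have hgint' : MeasureTheory.IntegrableOn gC (Set.Ioc (0:ℝ) 1) MeasureTheory.volume :=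
        hgint.mono_set Set.Ioc_subset_Icc_self
      have := hgint'.bdd_mul hcont_e.aestronglyMeasurable
        (Filter.Eventually.of_forall fun x => le_of_eq (hnorm_exp k x))
      exact this.congr (Filter.Eventually.of_forall fun x => mul_comm _ _)
    have I2 : IntervalIntegrable (fun x => ((p.eval (z x) : ℝ) : ℂ) * e x)
        MeasureTheory.volume 0 1 :=
      ((Complex.continuous_ofReal.comp hPcont).mul hcont_e).intervalIntegrable 0 1
    have hsplit : ∀ x ∈ Set.uIcc (0:ℝ) 1, ((φ (z x) : ℝ) : ℂ) * e x
        = gC x * e x + ((p.eval (z x) : ℝ) : ℂ) * e x := by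
      intro x _
      rw [hgCdef]
      push_cast
      ring
    rw [intervalIntegral.integral_congr hsplit, intervalIntegral.integral_add I1 I2]
    have hBLz : CTEB.BL (B : ℤ) (fun x : ℝ => ((z x : ℝ) : ℂ)) := ⟨c, hz⟩
    have hBLP : CTEB.BL ((r : ℤ) * (B : ℤ)) (fun x : ℝ => ((p.eval (z x) : ℝ) : ℂ)) := by
      have hPeval : (fun x : ℝ => ((p.eval (z x) : ℝ) : ℂ))
          = fun x : ℝ => ∑ j ∈ Finset.range (r + 1),
              ((p.coeff j : ℝ) : ℂ) * ((z x : ℝ) : ℂ) ^ j := by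
        funext x
        rw [Polynomial.eval_eq_sum_range' (lt_of_le_of_lt hdeg (Nat.lt_succ_self r))]
        push_cast
        ring
      rw [hPeval]
      apply CTEB.BL.finset_sum
      intro j hj
      have hjr : j ≤ r := Nat.lt_succ_iff.mp (Finset.mem_range.mp hj)
      have hle : ((j : ℤ) * (B : ℤ)) ≤ ((r : ℤ) * (B : ℤ)) := by
        apply mul_le_mul_of_nonneg_right _ (Int.ofNat_nonneg B)
        exact_mod_cast hjr
      exact ((hBLz.pow j).mono hle).const_mul _
    have hvanish := hBLP.integral_mul_exp_eq_zero hk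
    rw [hedef]
    rw [show (∫ x in (0:ℝ)..1, ((p.eval (z x) : ℝ) : ℂ) *
        Complex.exp (-(2 * (Real.pi : ℂ) * Complex.I * (k : ℂ) * (x : ℂ)))) = 0 from hvanish]
    rw [add_zero]
  -- Step 6: summability and the final estimate
  set c2 : ℤ → ℝ := fun n => ‖fourierCoeff (f2 : AddCircle (1:ℝ) → ℂ) n‖ ^ 2 with hc2def
  have hsummable : Summable c2 := by
    have hmem : Memℓp (fun i => fourierBasis.repr f2 i) 2 := lp.memℓp _
    rw [memℓp_gen_iff (by norm_num : 0 < (2 : ENNReal).toReal)] at hmem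
    refine hmem.congr fun n => ?_
    rw [fourierBasis_repr]
    rw [show ((2 : ENNReal).toReal) = ((2:ℕ):ℝ) by norm_num, Real.rpow_natCast, hc2def]
  have hterm : ∀ k : {k : ℤ // ((r : ℤ) * (B : ℤ)) < |k|},
      ‖a k.1‖ ^ 2 = c2 k.1 := by
    intro k
    rw [hc2def]
    simp only
    rw [hcoeff k.1, ← htail k.1 k.2]
  calc (∑' k : {k : ℤ // ((r : ℤ) * (B : ℤ)) < |k|}, ‖a k.1‖ ^ 2)
      ≤ ∑' n : ℤ, c2 n := by
        apply Summable.tsum_le_tsum_of_inj (Subtype.val)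
          (Subtype.val_injective)
          (fun n _ => sq_nonneg _)
          (fun k => le_of_eq (hterm k))
        · exact (Summable.congr (hsummable.subtype _) (fun k => (hterm k).symm))
        · exact hsummable
    _ = ∫ t : AddCircle (1:ℝ), ‖(f2 : AddCircle (1:ℝ) → ℂ) t‖ ^ 2 ∂haarAddCircle := hpars
    _ ≤ ε ^ 2 := hrhs
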